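/- (Fletcher–Reeves, strong Wolfe) Let 0 ≤ δ < 1 and assume Assumption A1 holds and Assumption A3 holds (the level set L₀ of x⁰ is bounded). Consider the conjugate gradient iteration with 0 ≤ β_k ≤ δ·β_k^{FR}, where β_k^{FR} := ψ_{x^k}(v(x^k)) / ψ_{x^{k−1}}(v(x^{k−1})) for k ≥ 1. If each d^k satisfies ψ_{x^k}(d^k) < 0 and each t_k satisfies the strong Wolfe conditions at x^k along d^k, then liminf_{k→∞} ‖v(x^k)‖ = 0. -/

import Mathlib

open scoped BigOperators

noncomputable def pd (n : ℕ) (F : EuclideanSpace ℝ (Fin n) → ℝ)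
    (x : EuclideanSpace ℝ (Fin n)) (j : Fin n) : ℝ :=
  fderiv ℝ F x (EuclideanSpace.single j (1 : ℝ))

noncomputable def glo (n : ℕ) (F H : EuclideanSpace ℝ (Fin n) → ℝ)
    (x : EuclideanSpace ℝ (Fin n)) (j : Fin n) : ℝ :=
  min (pd n F x j) (pd n H x j)

noncomputable def ghi (n : ℕ) (F H : EuclideanSpace ℝ (Fin n) → ℝ)
    (x : EuclideanSpace ℝ (Fin n)) (j : Fin n) : ℝ :=
  max (pd n F x j) (pd n H x j)

noncomputable def gloVec (n : ℕ) (F H : EuclideanSpace ℝ (Fin n) → ℝ)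
    (x : EuclideanSpace ℝ (Fin n)) : EuclideanSpace ℝ (Fin n) :=
  WithLp.toLp 2 (fun j => glo n F H x j)

noncomputable def ghiVec (n : ℕ) (F H : EuclideanSpace ℝ (Fin n) → ℝ)
    (x : EuclideanSpace ℝ (Fin n)) : EuclideanSpace ℝ (Fin n) :=
  WithLp.toLp 2 (fun j => ghi n F H x j)

noncomputable def psi (m n : ℕ) (Gl Gu : Fin m → EuclideanSpace ℝ (Fin n) → ℝ)
    (x v : EuclideanSpace ℝ (Fin n)) : ℝ :=
  ⨆ i : Fin m, (1 / 2 : ℝ) *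
    ((∑ j : Fin n, (glo n (Gl i) (Gu i) x j + ghi n (Gl i) (Gu i) x j) * v j) +
     (∑ j : Fin n, (ghi n (Gl i) (Gu i) x j - glo n (Gl i) (Gu i) x j) * |v j|))

def LevelSet (m n : ℕ) (Gl Gu : Fin m → EuclideanSpace ℝ (Fin n) → ℝ)
    (x0 : EuclideanSpace ℝ (Fin n)) : Set (EuclideanSpace ℝ (Fin n)) :=
  {x | ∀ i : Fin m, Gl i x ≤ Gl i x0 ∧ Gu i x ≤ Gu i x0}

def StdWolfe (m n : ℕ) (Gl Gu : Fin m → EuclideanSpace ℝ (Fin n) → ℝ)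
    (ρ σ : ℝ) (x d : EuclideanSpace ℝ (Fin n)) (t : ℝ) : Prop :=
  (∀ i : Fin m,
      Gl i (x + t • d) ≤ Gl i x + ρ * t * psi m n Gl Gu x d ∧
      Gu i (x + t • d) ≤ Gu i x + ρ * t * psi m n Gl Gu x d) ∧
  σ * psi m n Gl Gu x d ≤ psi m n Gl Gu (x + t • d) d

def StrongWolfe (m n : ℕ) (Gl Gu : Fin m → EuclideanSpace ℝ (Fin n) → ℝ)
    (ρ σ : ℝ) (x d : EuclideanSpace ℝ (Fin n)) (t : ℝ) : Prop :=
  (∀ i : Fin m,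
      Gl i (x + t • d) ≤ Gl i x + ρ * t * psi m n Gl Gu x d ∧
      Gu i (x + t • d) ≤ Gu i x + ρ * t * psi m n Gl Gu x d) ∧
  |psi m n Gl Gu (x + t • d) d| ≤ σ * |psi m n Gl Gu x d|

def AssumptionA1 (m n : ℕ) (Gl Gu : Fin m → EuclideanSpace ℝ (Fin n) → ℝ)
    (x0 : EuclideanSpace ℝ (Fin n)) : Prop :=
  ∀ i : Fin m, ∃ L : ℝ, 0 < L ∧
    ∀ y ∈ LevelSet m n Gl Gu x0, ∀ z ∈ LevelSet m n Gl Gu x0,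
      ‖gloVec n (Gl i) (Gu i) y - gloVec n (Gl i) (Gu i) z‖ ≤ L * ‖y - z‖ ∧
      ‖ghiVec n (Gl i) (Gu i) y - ghiVec n (Gl i) (Gu i) z‖ ≤ L * ‖y - z‖

def AssumptionA2 (m n : ℕ) (Gl Gu : Fin m → EuclideanSpace ℝ (Fin n) → ℝ)
    (x0 : EuclideanSpace ℝ (Fin n)) : Prop :=
  ∀ y : ℕ → EuclideanSpace ℝ (Fin n),
    (∀ k, y k ∈ LevelSet m n Gl Gu x0) →
    (∀ (i : Fin m) (k : ℕ), Gl i (y (k+1)) ≤ Gl i (y k) ∧ Gu i (y (k+1)) ≤ Gu i (y k)) →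
    ∀ i : Fin m, (∃ Cl : ℝ, ∀ k, Cl ≤ Gl i (y k)) ∧ (∃ Cu : ℝ, ∀ k, Cu ≤ Gu i (y k))

/-!
The scalarization `ψ_x` is a maximum of support functions of boxes, hence sublinear in the
direction; by A1 it is Lipschitz in `x` on the bounded level set `L₀`, where it is also bounded
below by `-M ‖·‖`. The sufficient decrease condition keeps the iterates in `L₀` and makes
`∑ t_k |ψ_{x_k}(d_k)|` finite, and the curvature condition together with the Lipschitz bound gives
`(1 - σ) |ψ_{x_k}(d_k)| ≤ L t_k ‖d_k‖²`. If `‖v(x_k)‖ ≥ γ > 0` eventually, then `-ψ_{x_k}(v(x_k))`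
stays between `γ² / 2` and `2 M²`, and `β_k ≤ δ β_k^FR` with `δ < 1` keeps `‖d_k‖` bounded, so
`ψ_{x_k}(d_k) → 0`. But sublinearity and the curvature condition give
`|ψ_{x_{k+1}}(d_{k+1})| ≥ γ² / 2 - C |ψ_{x_k}(d_k)|`, a contradiction.
-/

open Filter Topology

section BoxSupport

variable {n : ℕ}

/-- The support function `v ↦ max {⟪g, v⟫ | a ≤ g ≤ b}` of the box `[a, b]` (for `a ≤ b`). -/
noncomputable def boxSupport (a b v : EuclideanSpace ℝ (Fin n)) : ℝ :=
  (1 / 2 : ℝ) * ((∑ j, (a j + b j) * v j) + (∑ j, (b j - a j) * |v j|))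

lemma abs_sum_mul_le (c v : EuclideanSpace ℝ (Fin n)) : |∑ j, c j * v j| ≤ ‖c‖ * ‖v‖ := by
  simpa [PiLp.inner_apply, mul_comm] using abs_real_inner_le_norm c v

lemma abs_sum_mul_abs_le (c v : EuclideanSpace ℝ (Fin n)) :
    |(∑ j, c j * |v j|)| ≤ ‖c‖ * ‖v‖ := by
  have hnorm : ‖(WithLp.toLp 2 fun j => |v j| : EuclideanSpace ℝ (Fin n))‖ = ‖v‖ := by
    simp [EuclideanSpace.norm_eq]
  simpa [hnorm] using abs_sum_mul_le c (WithLp.toLp 2 fun j => |v j|)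

lemma abs_boxSupport_le (a b v : EuclideanSpace ℝ (Fin n)) :
    |boxSupport a b v| ≤ (‖a‖ + ‖b‖) * ‖v‖ := by
  have h₁ : |∑ j, (a j + b j) * v j| ≤ (‖a‖ + ‖b‖) * ‖v‖ := by
    simpa using (abs_sum_mul_le (a + b) v).trans (by gcongr; exact norm_add_le a b)
  have h₂ : |(∑ j, (b j - a j) * |v j|)| ≤ (‖a‖ + ‖b‖) * ‖v‖ := by
    simpa using (abs_sum_mul_abs_le (b - a) v).trans
      (by gcongr; exact (norm_sub_le b a).trans_eq (add_comm _ _))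
  rw [boxSupport, abs_mul, abs_of_pos (by norm_num : (0 : ℝ) < 1 / 2)]
  linarith [abs_add_le (∑ j, (a j + b j) * v j) (∑ j, (b j - a j) * |v j|)]

lemma boxSupport_sub_boxSupport (a b a' b' v : EuclideanSpace ℝ (Fin n)) :
    boxSupport a b v - boxSupport a' b' v = boxSupport (a - a') (b - b') v := by
  simp only [boxSupport, PiLp.sub_apply, ← mul_sub]
  rw [add_sub_add_comm, ← Finset.sum_sub_distrib, ← Finset.sum_sub_distrib]
  congr 2 <;> exact Finset.sum_congr rfl fun j _ => by ring

lemma boxSupport_add_le {a b : EuclideanSpace ℝ (Fin n)} (hab : ∀ j, a j ≤ b j)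
    (u v : EuclideanSpace ℝ (Fin n)) :
    boxSupport a b (u + v) ≤ boxSupport a b u + boxSupport a b v := by
  have h : ∑ j, (b j - a j) * |u j + v j| ≤ ∑ j, (b j - a j) * (|u j| + |v j|) :=
    Finset.sum_le_sum fun j _ => mul_le_mul_of_nonneg_left (abs_add_le _ _) (sub_nonneg.2 (hab j))
  simp only [boxSupport, PiLp.add_apply, mul_add, Finset.sum_add_distrib] at h ⊢
  linarith

lemma boxSupport_smul (a b v : EuclideanSpace ℝ (Fin n)) {c : ℝ} (hc : 0 ≤ c) :
    boxSupport a b (c • v) = c * boxSupport a b v := by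
  simp only [boxSupport, PiLp.smul_apply, smul_eq_mul, abs_mul, abs_of_nonneg hc,
    mul_left_comm _ c, ← Finset.mul_sum]
  ring

end BoxSupport

section Scalarization

variable {m n : ℕ} (Gl Gu : Fin m → EuclideanSpace ℝ (Fin n) → ℝ)

lemma psi_eq_iSup (x v : EuclideanSpace ℝ (Fin n)) :
    psi m n Gl Gu x v =
      ⨆ i, boxSupport (gloVec n (Gl i) (Gu i) x) (ghiVec n (Gl i) (Gu i) x) v :=
  rfl

lemma boxSupport_le_psi (i : Fin m) (x v : EuclideanSpace ℝ (Fin n)) :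
    boxSupport (gloVec n (Gl i) (Gu i) x) (ghiVec n (Gl i) (Gu i) x) v ≤ psi m n Gl Gu x v :=
  le_ciSup (f := fun i => boxSupport (gloVec n (Gl i) (Gu i) x) (ghiVec n (Gl i) (Gu i) x) v)
    (Set.finite_range _).bddAbove i

lemma psi_le_of_forall_le [Nonempty (Fin m)] {x v : EuclideanSpace ℝ (Fin n)} {c : ℝ}
    (h : ∀ i, boxSupport (gloVec n (Gl i) (Gu i) x) (ghiVec n (Gl i) (Gu i) x) v ≤ c) :
    psi m n Gl Gu x v ≤ c :=
  ciSup_le h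

lemma psi_smul (x v : EuclideanSpace ℝ (Fin n)) {c : ℝ} (hc : 0 ≤ c) :
    psi m n Gl Gu x (c • v) = c * psi m n Gl Gu x v := by
  simp only [psi_eq_iSup, boxSupport_smul _ _ _ hc, Real.mul_iSup_of_nonneg hc]

lemma psi_zero (x : EuclideanSpace ℝ (Fin n)) : psi m n Gl Gu x 0 = 0 := by
  simpa using psi_smul Gl Gu x 0 le_rfl

lemma psi_add_le [Nonempty (Fin m)] (x u v : EuclideanSpace ℝ (Fin n)) :
    psi m n Gl Gu x (u + v) ≤ psi m n Gl Gu x u + psi m n Gl Gu x v :=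
  psi_le_of_forall_le Gl Gu fun i => (boxSupport_add_le (fun _ => min_le_max) u v).trans
    (add_le_add (boxSupport_le_psi Gl Gu i x u) (boxSupport_le_psi Gl Gu i x v))

lemma neg_mul_norm_le_psi (i : Fin m) (x v : EuclideanSpace ℝ (Fin n)) :
    -((‖gloVec n (Gl i) (Gu i) x‖ + ‖ghiVec n (Gl i) (Gu i) x‖) * ‖v‖) ≤ psi m n Gl Gu x v :=
  (neg_le_of_abs_le (abs_boxSupport_le _ _ v)).trans (boxSupport_le_psi Gl Gu i x v)

lemma psi_le_psi_add [Nonempty (Fin m)] {y z : EuclideanSpace ℝ (Fin n)} {K : ℝ}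
    (hK : ∀ i, ‖gloVec n (Gl i) (Gu i) y - gloVec n (Gl i) (Gu i) z‖ +
      ‖ghiVec n (Gl i) (Gu i) y - ghiVec n (Gl i) (Gu i) z‖ ≤ K)
    (v : EuclideanSpace ℝ (Fin n)) :
    psi m n Gl Gu y v ≤ psi m n Gl Gu z v + K * ‖v‖ :=
  psi_le_of_forall_le Gl Gu fun i => by
    have hdiff := le_of_abs_le (abs_boxSupport_le
      (gloVec n (Gl i) (Gu i) y - gloVec n (Gl i) (Gu i) z)
      (ghiVec n (Gl i) (Gu i) y - ghiVec n (Gl i) (Gu i) z) v)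
    rw [← boxSupport_sub_boxSupport] at hdiff
    linarith [boxSupport_le_psi Gl Gu i z v, mul_le_mul_of_nonneg_right (hK i) (norm_nonneg v)]

variable {Gl Gu} {x0 : EuclideanSpace ℝ (Fin n)}

lemma mem_levelSet_self : x0 ∈ LevelSet m n Gl Gu x0 := fun _ => ⟨le_rfl, le_rfl⟩

lemma AssumptionA1.exists_psi_le_psi_add [Nonempty (Fin m)] (h : AssumptionA1 m n Gl Gu x0) :
    ∃ L, 0 ≤ L ∧ ∀ y ∈ LevelSet m n Gl Gu x0, ∀ z ∈ LevelSet m n Gl Gu x0,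
      ∀ v, psi m n Gl Gu y v ≤ psi m n Gl Gu z v + L * ‖y - z‖ * ‖v‖ := by
  choose Lf hLf_pos hLf using h
  obtain ⟨L, hL⟩ := Finite.exists_le Lf
  have hL_pos : 0 < L := (hLf_pos (Classical.arbitrary _)).trans_le (hL _)
  refine ⟨2 * L, by positivity, fun y hy z hz v => ?_⟩
  refine psi_le_psi_add Gl Gu (fun i => ?_) v
  have hyz := hLf i y hy z hz
  linarith [mul_le_mul_of_nonneg_right (hL i) (norm_nonneg (y - z))]

lemma AssumptionA1.exists_neg_mul_norm_le_psi [Nonempty (Fin m)]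
    (h : AssumptionA1 m n Gl Gu x0) (hb : Bornology.IsBounded (LevelSet m n Gl Gu x0)) :
    ∃ M, ∀ y ∈ LevelSet m n Gl Gu x0, ∀ v, -(M * ‖v‖) ≤ psi m n Gl Gu y v := by
  obtain ⟨L, hL_nonneg, hL⟩ := h.exists_psi_le_psi_add
  obtain ⟨R, hR⟩ := hb.subset_closedBall x0
  let i : Fin m := Classical.arbitrary _
  refine ⟨‖gloVec n (Gl i) (Gu i) x0‖ + ‖ghiVec n (Gl i) (Gu i) x0‖ + L * R, fun y hy v => ?_⟩
  have hyR : ‖x0 - y‖ ≤ R := by simpa [dist_eq_norm'] using hR hy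
  have hx0 := hL x0 mem_levelSet_self y hy v
  nlinarith [neg_mul_norm_le_psi Gl Gu i x0 v, mul_le_mul_of_nonneg_left hyR hL_nonneg,
    norm_nonneg v]

end Scalarization

lemma summable_of_le_sub {f s : ℕ → ℝ} {C : ℝ} (hs : ∀ k, 0 ≤ s k)
    (hf : ∀ k, f (k + 1) ≤ f k - s k) (hC : ∀ k, C ≤ f k) : Summable s :=
  summable_of_sum_range_le (c := f 0 - C) hs fun N => by
    have h := Finset.sum_le_sum fun k (_ : k ∈ Finset.range N) => le_sub_comm.1 (hf k)
    rw [Finset.sum_range_sub'] at h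
    linarith [hC N]

lemma tendsto_zero_of_le_mul {p t : ℕ → ℝ} {C : ℝ} (hp : ∀ k, 0 ≤ p k)
    (htp : Tendsto (fun k => t k * p k) atTop (𝓝 0)) (h : ∀ᶠ k in atTop, p k ≤ C * t k) :
    Tendsto p atTop (𝓝 0) := by
  have hsq : Tendsto (fun k => p k ^ 2) atTop (𝓝 0) := by
    refine squeeze_zero' (Eventually.of_forall fun k => sq_nonneg (p k)) ?_
      (by simpa using htp.const_mul C)
    filter_upwards [h] with k hk
    nlinarith [hp k]
  simpa [Real.sqrt_sq (hp _)] using hsq.sqrt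

lemma not_tendsto_zero_of_le_sub {p : ℕ → ℝ} {a b : ℝ} (ha : 0 < a)
    (h : ∀ᶠ k in atTop, a - b * p k ≤ p (k + 1)) : ¬Tendsto p atTop (𝓝 0) := fun hp => by
  have hlim := le_of_tendsto_of_tendsto (tendsto_const_nhds.sub (hp.const_mul b))
    (hp.comp (tendsto_add_atTop_nat 1)) h
  rw [mul_zero, sub_zero] at hlim
  exact hlim.not_gt ha

lemma liminf_eq_zero_of_frequently_lt {u : ℕ → ℝ} {C : ℝ} (h0 : ∀ k, 0 ≤ u k)
    (hC : ∀ k, u k ≤ C) (h : ∀ γ > 0, ∃ᶠ k in atTop, u k < γ) : liminf u atTop = 0 := by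
  refine le_antisymm (le_of_forall_pos_le_add fun γ hγ => ?_)
    (le_liminf_of_le (isBoundedUnder_of ⟨C, hC⟩).isCoboundedUnder_ge (.of_forall h0))
  rw [zero_add]
  exact liminf_le_of_frequently_le ((h γ hγ).mono fun _ => le_of_lt) (isBoundedUnder_of ⟨0, h0⟩)

lemma norm_sq_div_two_le_neg {E : Type*} [SeminormedAddCommGroup E] {f : E → ℝ} (h0 : f 0 = 0)
    {v : E} (hv : ∀ w, f v + (1 / 2) * ‖v‖ ^ 2 ≤ f w + (1 / 2) * ‖w‖ ^ 2) : ‖v‖ ^ 2 / 2 ≤ -f v := by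
  have h := hv 0
  rw [h0, norm_zero] at h
  linarith

section ConjugateGradient

variable {E : Type*} [SeminormedAddCommGroup E] [NormedSpace ℝ E]

lemma map_add_smul_le {f : E → ℝ} (hadd : ∀ u w, f (u + w) ≤ f u + f w)
    (hsmul : ∀ w {c : ℝ}, 0 ≤ c → f (c • w) = c * f w) (g : E) {d : E} {β c : ℝ} (hβ : 0 ≤ β)
    (hd : f d ≤ c) : f (g + β • d) ≤ f g + β * c :=
  (hadd g (β • d)).trans (by rw [hsmul d hβ]; gcongr)

lemma exists_norm_le_mul_of_beta_le {g d : ℕ → E} {β P : ℕ → ℝ} {δ c : ℝ} {K : ℕ}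
    (hδ : δ < 1) (hP : ∀ k ≥ K, 0 < P k) (hd : ∀ k, d (k + 1) = g (k + 1) + β (k + 1) • d k)
    (hβ : ∀ k, 0 ≤ β (k + 1) ∧ β (k + 1) ≤ δ * (P (k + 1) / P k))
    (hg : ∀ k ≥ K, ‖g k‖ ≤ c * P k) :
    ∃ R, 0 ≤ R ∧ ∀ k ≥ K, ‖d k‖ ≤ R * P k := by
  set R := max (‖d K‖ / P K) (c / (1 - δ))
  have hPK := hP K le_rfl
  refine ⟨R, le_max_of_le_left (by positivity), fun k hk => ?_⟩
  induction k, hk using Nat.le_induction with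
  | base => exact (div_le_iff₀ hPK).1 (le_max_left _ _)
  | succ k hk ih =>
    have hPk := hP k hk
    have hcR : c ≤ (1 - δ) * R := (div_le_iff₀' (by linarith)).1 (le_max_right _ _)
    have hβd : β (k + 1) * ‖d k‖ ≤ δ * R * P (k + 1) := calc
      β (k + 1) * ‖d k‖ ≤ δ * (P (k + 1) / P k) * (R * P k) :=
        mul_le_mul (hβ k).2 ih (norm_nonneg _) ((hβ k).1.trans (hβ k).2)
      _ = δ * R * P (k + 1) := by field_simp
    calc ‖d (k + 1)‖ ≤ ‖g (k + 1)‖ + β (k + 1) * ‖d k‖ := by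
          rw [hd k]
          exact (norm_add_le _ _).trans_eq (by rw [norm_smul, Real.norm_of_nonneg (hβ k).1])
      _ ≤ c * P (k + 1) + δ * R * P (k + 1) := add_le_add (hg _ (by omega)) hβd
      _ ≤ R * P (k + 1) := by nlinarith [hP (k + 1) (by omega)]

lemma one_sub_mul_neg_le_of_curvature {ψ : E → E → ℝ} {x d : E} {t σ L : ℝ} (ht : 0 ≤ t)
    (hdesc : ψ x d < 0) (hcurv : |ψ (x + t • d) d| ≤ σ * |ψ x d|)
    (hlip : ψ (x + t • d) d ≤ ψ x d + L * ‖x + t • d - x‖ * ‖d‖) :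
    (1 - σ) * -ψ x d ≤ L * t * ‖d‖ ^ 2 := by
  rw [add_sub_cancel_left, norm_smul, Real.norm_of_nonneg ht] at hlip
  rw [abs_of_neg hdesc] at hcurv
  nlinarith [neg_abs_le (ψ (x + t • d) d)]

lemma tendsto_psi_zero_of_norm_le {ψ : E → E → ℝ} {x d : ℕ → E} {t : ℕ → ℝ} {S : Set E}
    {L σ D : ℝ} (hS : ∀ k, x k ∈ S) (hL : 0 ≤ L)
    (hlip : ∀ y ∈ S, ∀ z ∈ S, ∀ w, ψ y w ≤ ψ z w + L * ‖y - z‖ * ‖w‖)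
    (hx : ∀ k, x (k + 1) = x k + t k • d k) (ht : ∀ k, 0 < t k)
    (hdesc : ∀ k, ψ (x k) (d k) < 0) (hσ : σ < 1)
    (hcurv : ∀ k, |ψ (x k + t k • d k) (d k)| ≤ σ * |ψ (x k) (d k)|)
    (hsum : Summable fun k => t k * ψ (x k) (d k)) (hD : ∀ᶠ k in atTop, ‖d k‖ ≤ D) :
    Tendsto (fun k => ψ (x k) (d k)) atTop (𝓝 0) := by
  suffices h : Tendsto (fun k => -ψ (x k) (d k)) atTop (𝓝 0) by simpa using h.neg
  refine tendsto_zero_of_le_mul (C := L * D ^ 2 / (1 - σ)) (fun k => (neg_pos.2 (hdesc k)).le)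
    (by simpa using hsum.tendsto_atTop_zero.neg) ?_
  filter_upwards [hD] with k hk
  have h := one_sub_mul_neg_le_of_curvature (ht k).le (hdesc k) (hcurv k)
    (by rw [← hx k]; exact hlip _ (hS _) _ (hS _) _)
  rw [div_mul_eq_mul_div, le_div_iff₀' (by linarith)]
  calc (1 - σ) * -ψ (x k) (d k) ≤ L * t k * ‖d k‖ ^ 2 := h
    _ ≤ L * t k * D ^ 2 := by gcongr; exact mul_nonneg hL (ht k).le
    _ = _ := by ring

theorem liminf_norm_eq_zero_of_strongWolfe
    {ψ : E → E → ℝ} {v : E → E} {x d : ℕ → E} {t β : ℕ → ℝ} {S : Set E} {L M σ δ : ℝ}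
    (hadd : ∀ y u w, ψ y (u + w) ≤ ψ y u + ψ y w)
    (hsmul : ∀ y w {c : ℝ}, 0 ≤ c → ψ y (c • w) = c * ψ y w)
    (hS : ∀ k, x k ∈ S) (hL : 0 ≤ L)
    (hlip : ∀ y ∈ S, ∀ z ∈ S, ∀ w, ψ y w ≤ ψ z w + L * ‖y - z‖ * ‖w‖)
    (hlow : ∀ y ∈ S, ∀ w, -(M * ‖w‖) ≤ ψ y w)
    (hv : ∀ y, ‖v y‖ ^ 2 / 2 ≤ -ψ y (v y))
    (hx : ∀ k, x (k + 1) = x k + t k • d k) (ht : ∀ k, 0 < t k)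
    (hd : ∀ k, d (k + 1) = v (x (k + 1)) + β (k + 1) • d k) (hδ : δ < 1)
    (hβ : ∀ k, 0 ≤ β (k + 1) ∧
      β (k + 1) ≤ δ * (ψ (x (k + 1)) (v (x (k + 1))) / ψ (x k) (v (x k))))
    (hdesc : ∀ k, ψ (x k) (d k) < 0) (hσ : σ < 1)
    (hcurv : ∀ k, |ψ (x k + t k • d k) (d k)| ≤ σ * |ψ (x k) (d k)|)
    (hsum : Summable fun k => t k * ψ (x k) (d k)) :
    liminf (fun k => ‖v (x k)‖) atTop = 0 := by
  set P : ℕ → ℝ := fun k => -ψ (x k) (v (x k)) with hP_def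
  set p : ℕ → ℝ := fun k => -ψ (x k) (d k)
  have hp : ∀ k, 0 < p k := fun k => neg_pos.2 (hdesc k)
  have hvP : ∀ k, ‖v (x k)‖ ^ 2 / 2 ≤ P k := fun k => hv (x k)
  have hPv : ∀ k, P k ≤ |M| * ‖v (x k)‖ := fun k =>
    (neg_le.1 (hlow _ (hS k) _)).trans (by gcongr; exact le_abs_self M)
  have hv_bdd : ∀ k, ‖v (x k)‖ ≤ 2 * |M| := fun k => by
    nlinarith [hvP k, hPv k, abs_nonneg M, norm_nonneg (v (x k))]
  have hP_bdd : ∀ k, P k ≤ 2 * M ^ 2 := fun k => by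
    nlinarith [hPv k, hv_bdd k, abs_nonneg M, sq_abs M]
  refine liminf_eq_zero_of_frequently_lt (fun k => norm_nonneg _) hv_bdd fun γ hγ => ?_
  by_contra hfreq
  obtain ⟨K, hK⟩ := eventually_atTop.1 (not_frequently.1 hfreq)
  simp only [not_lt] at hK
  have hPγ : ∀ k ≥ K, γ ^ 2 / 2 ≤ P k := fun k hk => by nlinarith [hK k hk, hvP k]
  have hPpos : ∀ k ≥ K, 0 < P k := fun k hk => by linarith [hPγ k hk, pow_pos hγ 2]
  have hv_le_P : ∀ k ≥ K, ‖v (x k)‖ ≤ 2 / γ * P k := fun k hk => by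
    rw [div_mul_eq_mul_div, le_div_iff₀ hγ]
    nlinarith [hK k hk, hvP k]
  have hβP : ∀ k, 0 ≤ β (k + 1) ∧ β (k + 1) ≤ δ * (P (k + 1) / P k) := fun k => by
    simpa only [hP_def, neg_div_neg_eq] using hβ k
  obtain ⟨R, hR0, hR⟩ := exists_norm_le_mul_of_beta_le hδ hPpos hd hβP hv_le_P
  have hcurv_succ : ∀ k, |ψ (x (k + 1)) (d k)| ≤ σ * p k := fun k => by
    simpa only [← hx k, abs_of_neg (hdesc k)] using hcurv k
  have hp_lim : Tendsto p atTop (𝓝 0) := by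
    simpa using (tendsto_psi_zero_of_norm_le hS hL hlip hx ht hdesc hσ hcurv hsum
      (eventually_atTop.2 ⟨K, fun k hk => (hR k hk).trans
        (mul_le_mul_of_nonneg_left (hP_bdd k) hR0)⟩)).neg
  refine not_tendsto_zero_of_le_sub (a := γ ^ 2 / 2) (b := 4 * M ^ 2 / γ ^ 2 * σ) (by positivity)
    (eventually_atTop.2 ⟨K, fun k hk => ?_⟩) hp_lim
  have hβB : β (k + 1) ≤ 4 * M ^ 2 / γ ^ 2 := calc
    β (k + 1) ≤ δ * (P (k + 1) / P k) := (hβP k).2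
    _ ≤ P (k + 1) / P k :=
      mul_le_of_le_one_left (div_nonneg (hPpos _ (by omega)).le (hPpos k hk).le) hδ.le
    _ ≤ 2 * M ^ 2 / (γ ^ 2 / 2) :=
      div_le_div₀ (by positivity) (hP_bdd _) (by positivity) (hPγ k hk)
    _ = 4 * M ^ 2 / γ ^ 2 := by ring
  have hσp : 0 ≤ σ * p k := (abs_nonneg _).trans (hcurv_succ k)
  have hstep := map_add_smul_le (hadd (x (k + 1))) (hsmul (x (k + 1))) (v (x (k + 1)))
    (hβP k).1 (le_of_abs_le (hcurv_succ k))
  rw [← hd k] at hstep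
  linarith [hPγ (k + 1) (by omega), mul_le_mul_of_nonneg_right hβB hσp]

end ConjugateGradient

section Iteration

variable {m n : ℕ} {Gl Gu : Fin m → EuclideanSpace ℝ (Fin n) → ℝ} {ρ σ : ℝ}
  {x d : ℕ → EuclideanSpace ℝ (Fin n)} {t : ℕ → ℝ}

lemma iterates_mem_levelSet (hρ : 0 ≤ ρ) (ht : ∀ k, 0 < t k)
    (hx : ∀ k, x (k + 1) = x k + t k • d k) (hdesc : ∀ k, psi m n Gl Gu (x k) (d k) < 0)
    (hw : ∀ k, StrongWolfe m n Gl Gu ρ σ (x k) (d k) (t k)) :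
    ∀ k, x k ∈ LevelSet m n Gl Gu (x 0) := by
  intro k
  induction k with
  | zero => exact mem_levelSet_self
  | succ k ih =>
    intro i
    have hdec : ρ * t k * psi m n Gl Gu (x k) (d k) ≤ 0 :=
      mul_nonpos_of_nonneg_of_nonpos (mul_nonneg hρ (ht k).le) (hdesc k).le
    obtain ⟨hl, hu⟩ := (hw k).1 i
    rw [← hx k] at hl hu
    exact ⟨(hl.trans (by linarith)).trans (ih i).1, (hu.trans (by linarith)).trans (ih i).2⟩

lemma summable_mul_psi_of_strongWolfe (i : Fin m) (hG : Continuous (Gl i))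
    (hb : Bornology.IsBounded (LevelSet m n Gl Gu (x 0))) (hρ : 0 < ρ) (ht : ∀ k, 0 < t k)
    (hx : ∀ k, x (k + 1) = x k + t k • d k) (hdesc : ∀ k, psi m n Gl Gu (x k) (d k) < 0)
    (hmem : ∀ k, x k ∈ LevelSet m n Gl Gu (x 0))
    (hw : ∀ k, StrongWolfe m n Gl Gu ρ σ (x k) (d k) (t k)) :
    Summable fun k => t k * psi m n Gl Gu (x k) (d k) := by
  obtain ⟨C, hC⟩ := hb.isCompact_closure.bddBelow_image hG.continuousOn
  have hs : Summable fun k => -(ρ * (t k * psi m n Gl Gu (x k) (d k))) := by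
    refine summable_of_le_sub (f := fun k => Gl i (x k)) (C := C)
      (fun k => neg_nonneg.2 (mul_nonpos_of_nonneg_of_nonpos hρ.le
        (mul_nonpos_of_nonneg_of_nonpos (ht k).le (hdesc k).le)))
      (fun k => ?_) fun k => hC ⟨x k, subset_closure (hmem k), rfl⟩
    have h := ((hw k).1 i).1
    rw [← hx k] at h
    linarith
  simpa [hρ.ne'] using hs.neg.mul_left ρ⁻¹

end Iteration

theorem fr_convergence_strong_wolfe_general (m n : ℕ) (hm : 0 < m)
    (Gl Gu : Fin m → EuclideanSpace ℝ (Fin n) → ℝ)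
    (hGl : ∀ i, ContDiff ℝ 1 (Gl i))
    (vv : EuclideanSpace ℝ (Fin n) → EuclideanSpace ℝ (Fin n))
    (hvmin : ∀ y w : EuclideanSpace ℝ (Fin n),
      psi m n Gl Gu y (vv y) + (1/2) * ‖vv y‖^2 ≤ psi m n Gl Gu y w + (1/2) * ‖w‖^2)
    (ρ σ : ℝ) (hρ : 0 < ρ) (hσ : σ < 1)
    (x d : ℕ → EuclideanSpace ℝ (Fin n)) (t : ℕ → ℝ) (β : ℕ → ℝ)
    (hx : ∀ k : ℕ, x (k+1) = x k + t k • d k)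
    (ht : ∀ k : ℕ, 0 < t k)
    (hdk : ∀ k : ℕ, d (k+1) = vv (x (k+1)) + β (k+1) • d k)
    (δ : ℝ) (hδ1 : δ < 1)
    (hA1 : AssumptionA1 m n Gl Gu (x 0))
    (hA3 : Bornology.IsBounded (LevelSet m n Gl Gu (x 0)))
    (hβ : ∀ k : ℕ, 0 ≤ β (k+1) ∧ β (k+1) ≤
      δ * (psi m n Gl Gu (x (k+1)) (vv (x (k+1))) / psi m n Gl Gu (x k) (vv (x k))))
    (hdesc : ∀ k : ℕ, psi m n Gl Gu (x k) (d k) < 0)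
    (hw : ∀ k : ℕ, StrongWolfe m n Gl Gu ρ σ (x k) (d k) (t k)) :
    Filter.liminf (fun k : ℕ => ‖vv (x k)‖) Filter.atTop = 0 := by
  have : Nonempty (Fin m) := ⟨⟨0, hm⟩⟩
  have hmem := iterates_mem_levelSet hρ.le ht hx hdesc hw
  obtain ⟨L, hL, hlip⟩ := hA1.exists_psi_le_psi_add
  obtain ⟨M, hlow⟩ := hA1.exists_neg_mul_norm_le_psi hA3
  exact liminf_norm_eq_zero_of_strongWolfe (psi_add_le Gl Gu) (psi_smul Gl Gu) hmem hL hlip hlow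
    (fun y => norm_sq_div_two_le_neg (psi_zero Gl Gu y) (hvmin y)) hx ht hdk hδ1 hβ hdesc hσ
    (fun k => (hw k).2)
    (summable_mul_psi_of_strongWolfe ⟨0, hm⟩ (hGl _).continuous hA3 hρ ht hx hdesc hmem hw)

theorem fr_convergence_strong_wolfe (m n : ℕ) (hm : 0 < m) (hn : 0 < n)
    (Gl Gu : Fin m → EuclideanSpace ℝ (Fin n) → ℝ)
    (hGl : ∀ i, ContDiff ℝ 1 (Gl i)) (hGu : ∀ i, ContDiff ℝ 1 (Gu i))
    (hle : ∀ (i : Fin m) (x : EuclideanSpace ℝ (Fin n)), Gl i x ≤ Gu i x)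
    (vv : EuclideanSpace ℝ (Fin n) → EuclideanSpace ℝ (Fin n))
    (hvmin : ∀ y w : EuclideanSpace ℝ (Fin n),
      psi m n Gl Gu y (vv y) + (1/2) * ‖vv y‖^2 ≤ psi m n Gl Gu y w + (1/2) * ‖w‖^2)
    (ρ σ : ℝ) (hρ : 0 < ρ) (hρσ : ρ < σ) (hσ : σ < 1)
    (x d : ℕ → EuclideanSpace ℝ (Fin n)) (t : ℕ → ℝ) (β : ℕ → ℝ)
    (hx : ∀ k : ℕ, x (k+1) = x k + t k • d k)
    (ht : ∀ k : ℕ, 0 < t k)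
    (hd0 : d 0 = vv (x 0))
    (hdk : ∀ k : ℕ, d (k+1) = vv (x (k+1)) + β (k+1) • d k)
    (hvne : ∀ k : ℕ, vv (x k) ≠ 0)
    (δ : ℝ) (hδ0 : 0 ≤ δ) (hδ1 : δ < 1)
    (hA1 : AssumptionA1 m n Gl Gu (x 0))
    (hA3 : Bornology.IsBounded (LevelSet m n Gl Gu (x 0)))
    (hβ : ∀ k : ℕ, 0 ≤ β (k+1) ∧ β (k+1) ≤
      δ * (psi m n Gl Gu (x (k+1)) (vv (x (k+1))) / psi m n Gl Gu (x k) (vv (x k))))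
    (hdesc : ∀ k : ℕ, psi m n Gl Gu (x k) (d k) < 0)
    (hw : ∀ k : ℕ, StrongWolfe m n Gl Gu ρ σ (x k) (d k) (t k)) :
    Filter.liminf (fun k : ℕ => ‖vv (x k)‖) Filter.atTop = 0 :=
  fr_convergence_strong_wolfe_general m n hm Gl Gu hGl vv hvmin ρ σ hρ hσ x d t β hx ht hdk δ hδ1
    hA1 hA3 hβ hdesc hw
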